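/- arXiv:2602.03546 — 2 statements merged into one kernel-verified Lean document; each statement's English description precedes it below -/
import Mathlib

section
/- For any vector s ∈ ℝ^E, the output v = -Ω s satisfies ‖v‖₂ ≤ ‖s‖₂ · √(R_max / R_min), where R_max and R_min are the largest and smallest diagonal entries of R. -/
/-!
`Ω = R Aᵀ (A R Aᵀ)⁻¹ A` satisfies `Ωᵀ R⁻¹ Ω = R⁻¹ Ω`, i.e. it is an orthogonal projection for
the inner product weighted by `R⁻¹`, so it does not increase the weighted norm `∑ xₑ² / rₑ`.
Passing from the Euclidean norm of `s` to its weighted norm costs a factor `1 / R_min`, and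
passing back from the weighted norm of `Ω s` costs a factor `R_max`.
-/

open Matrix

namespace Matrix

variable {m n α : Type*} [Fintype m] [Fintype n]

theorem mulVec_dotProduct_mulVec_mulVec [CommSemiring α] (N Q : Matrix n n α) (x : n → α) :
    (N *ᵥ x) ⬝ᵥ (Q *ᵥ (N *ᵥ x)) = x ⬝ᵥ ((Nᵀ * Q * N) *ᵥ x) := by
  rw [dotProduct_comm, dotProduct_mulVec, ← mulVec_transpose, dotProduct_comm, mulVec_mulVec,
    mulVec_mulVec, Matrix.mul_assoc]

/-- `Pᵀ Q P = Q P` says that `P` is a `Q`-orthogonal projection. -/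
theorem dotProduct_mulVec_le_of_transpose_mul_mul_eq [DecidableEq n] {Q P : Matrix n n ℝ}
    (hQ : Q.PosSemidef) (hP : Pᵀ * Q * P = Q * P) (x : n → ℝ) :
    (P *ᵥ x) ⬝ᵥ (Q *ᵥ (P *ᵥ x)) ≤ x ⬝ᵥ (Q *ᵥ x) := by
  have hQt : Qᵀ = Q := by
    simpa [conjTranspose_eq_transpose_of_trivial] using hQ.isHermitian.eq
  have hPtQ : Pᵀ * Q = Q * P := by
    have := congrArg transpose hP
    rwa [transpose_mul, transpose_mul, transpose_transpose, hQt, ← Matrix.mul_assoc, hP,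
      transpose_mul, hQt, eq_comm] at this
  have hcompl : (1 - P)ᵀ * Q * (1 - P) = Q - Q * P := by
    calc (1 - P)ᵀ * Q * (1 - P) = Q - Q * P - Pᵀ * Q + Pᵀ * Q * P := by
          rw [transpose_sub, transpose_one]; noncomm_ring
      _ = Q - Q * P := by rw [hP, hPtQ]; abel
  have hnonneg := hQ.dotProduct_mulVec_nonneg ((1 - P) *ᵥ x)
  rw [star_trivial, mulVec_dotProduct_mulVec_mulVec, hcompl, sub_mulVec, dotProduct_sub,
    sub_nonneg] at hnonneg
  rwa [mulVec_dotProduct_mulVec_mulVec, hP]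

/-- The `Ω` of the theorem: the projection onto the range of `R Aᵀ` along the kernel of `A`. -/
noncomputable def weightedProj [DecidableEq m] [CommRing α] (R : Matrix n n α)
    (A : Matrix m n α) : Matrix n n α :=
  R * Aᵀ * (A * R * Aᵀ)⁻¹ * A

theorem transpose_weightedProj_mul_inv_mul [DecidableEq m] [DecidableEq n] [CommRing α]
    {R : Matrix n n α} (hRt : Rᵀ = R) (hR : IsUnit R) (A : Matrix m n α)
    (hARA : IsUnit (A * R * Aᵀ)) :
    (weightedProj R A)ᵀ * R⁻¹ * weightedProj R A = R⁻¹ * weightedProj R A := by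
  have hRdet := (isUnit_iff_isUnit_det R).mp hR
  have hdet := (isUnit_iff_isUnit_det _).mp hARA
  have hBt : (A * R * Aᵀ)⁻¹ᵀ = (A * R * Aᵀ)⁻¹ := by
    rw [transpose_nonsing_inv, transpose_mul, transpose_mul, transpose_transpose, hRt,
      Matrix.mul_assoc]
  unfold weightedProj
  calc (R * Aᵀ * (A * R * Aᵀ)⁻¹ * A)ᵀ * R⁻¹ * (R * Aᵀ * (A * R * Aᵀ)⁻¹ * A)
      = Aᵀ * (A * R * Aᵀ)⁻¹ * ((A * R * Aᵀ) * (A * R * Aᵀ)⁻¹) * A := by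
        rw [transpose_mul, transpose_mul, transpose_mul, transpose_transpose, hBt, hRt]
        simp only [Matrix.mul_assoc, nonsing_inv_mul_cancel_left _ _ hRdet]
    _ = R⁻¹ * (R * Aᵀ * (A * R * Aᵀ)⁻¹ * A) := by
        rw [mul_nonsing_inv _ hdet, Matrix.mul_one]
        simp only [Matrix.mul_assoc, nonsing_inv_mul_cancel_left _ _ hRdet]

theorem dotProduct_inv_diagonal_mulVec [DecidableEq n] {r : n → ℝ} (hr : ∀ i, r i ≠ 0)
    (x : n → ℝ) :
    x ⬝ᵥ ((diagonal r)⁻¹ *ᵥ x) = ∑ i, x i ^ 2 / r i := by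
  have hinv : (diagonal r)⁻¹ = diagonal r⁻¹ :=
    inv_eq_left_inv (by rw [diagonal_mul_diagonal]; simp [inv_mul_cancel₀ (hr _)])
  simp only [hinv, dotProduct, mulVec_diagonal, Pi.inv_apply]
  exact Finset.sum_congr rfl fun i _ => by ring

end Matrix

section WeightedSums

variable {ι : Type*} [Fintype ι] {r x : ι → ℝ} {c : ℝ}

theorem sum_sq_le_mul_sum_sq_div (hr : ∀ i, 0 < r i) (hc : ∀ i, r i ≤ c) :
    ∑ i, x i ^ 2 ≤ c * ∑ i, x i ^ 2 / r i := by
  rw [Finset.mul_sum]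
  gcongr with i
  calc x i ^ 2 = r i * (x i ^ 2 / r i) := by field_simp [(hr i).ne']
    _ ≤ c * (x i ^ 2 / r i) := by gcongr; exacts [div_nonneg (sq_nonneg _) (hr i).le, hc i]

theorem sum_sq_div_le_sum_sq_div (hc : 0 < c) (hr : ∀ i, c ≤ r i) :
    ∑ i, x i ^ 2 / r i ≤ (∑ i, x i ^ 2) / c := by
  rw [Finset.sum_div]
  gcongr with i
  exact hr i

end WeightedSums

theorem omega_output_norm_bound_general
    (C E : ℕ) (A : Matrix (Fin C) (Fin E) ℝ) (R : Matrix (Fin E) (Fin E) ℝ)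
    (hRdiag : R.IsDiag) (hRpd : R.PosDef)
    (hinv : IsUnit (A * R * Aᵀ))
    (Rmax Rmin : ℝ)
    (hmax : IsGreatest (Set.range fun e => R e e) Rmax)
    (hmin : IsLeast (Set.range fun e => R e e) Rmin)
    (s : Fin E → ℝ) :
    Real.sqrt (∑ e, (-((R * Aᵀ * (A * R * Aᵀ)⁻¹ * A) *ᵥ s)) e ^ 2)
      ≤ Real.sqrt (∑ e, s e ^ 2) * Real.sqrt (Rmax / Rmin) := by
  change √(∑ e, (-(weightedProj R A *ᵥ s)) e ^ 2) ≤ _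
  set r : Fin E → ℝ := fun e => R e e
  have hRr : diagonal r = R := hRdiag.diagonal_diag
  have hr : ∀ e, 0 < r e := posDef_diagonal_iff.mp (hRr ▸ hRpd)
  obtain ⟨e₀, he₀⟩ := hmin.1
  have hRmin : 0 < Rmin := he₀ ▸ hr e₀
  have hRmax : 0 ≤ Rmax := hRmin.le.trans (hmin.2 hmax.1)
  set v := weightedProj R A *ᵥ s
  have hcontract : ∑ e, v e ^ 2 / r e ≤ ∑ e, s e ^ 2 / r e := by
    simp only [← dotProduct_inv_diagonal_mulVec fun e => (hr e).ne', hRr]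
    exact dotProduct_mulVec_le_of_transpose_mul_mul_eq hRpd.inv.posSemidef
      (transpose_weightedProj_mul_inv_mul (by rw [← hRr, diagonal_transpose]) hRpd.isUnit A
        hinv) s
  have hsq : ∑ e, v e ^ 2 ≤ (∑ e, s e ^ 2) * (Rmax / Rmin) := calc
    ∑ e, v e ^ 2 ≤ Rmax * ∑ e, v e ^ 2 / r e :=
        sum_sq_le_mul_sum_sq_div hr fun e => hmax.2 ⟨e, rfl⟩
    _ ≤ Rmax * ((∑ e, s e ^ 2) / Rmin) := by
        gcongr
        exact hcontract.trans (sum_sq_div_le_sum_sq_div hRmin fun e => hmin.2 ⟨e, rfl⟩)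
    _ = (∑ e, s e ^ 2) * (Rmax / Rmin) := by ring
  rw [← Real.sqrt_mul (by positivity)]
  exact Real.sqrt_le_sqrt (by simpa only [Pi.neg_apply, neg_sq] using hsq)

theorem omega_output_norm_bound
    (C E : ℕ) (A : Matrix (Fin C) (Fin E) ℝ) (R : Matrix (Fin E) (Fin E) ℝ)
    (hA : A.rank = C) (hRdiag : R.IsDiag) (hRpd : R.PosDef)
    (hinv : IsUnit (A * R * Aᵀ))
    (Rmax Rmin : ℝ)
    (hmax : IsGreatest (Set.range fun e => R e e) Rmax)
    (hmin : IsLeast (Set.range fun e => R e e) Rmin)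
    (s : Fin E → ℝ) :
    Real.sqrt (∑ e, (-((R * Aᵀ * (A * R * Aᵀ)⁻¹ * A) *ᵥ s)) e ^ 2)
      ≤ Real.sqrt (∑ e, s e ^ 2) * Real.sqrt (Rmax / Rmin) :=
  omega_output_norm_bound_general C E A R hRdiag hRpd hinv Rmax Rmin hmax hmin s
end

section
/- The Jacobian of the map r ↦ v(r) := -Ω_{A/R} s with respect to the resistance vector r equals (I - Ω_{A/R}) diag(i), where i = -R⁻¹ Ω_{A/R} s; that is, ∂v_a/∂r_b = ((I - Ω_{A/R}) diag(i))_{ab}. -/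
open Matrix

noncomputable def OmMat {C E : ℕ} (A : Matrix (Fin C) (Fin E) ℝ) (r : Fin E → ℝ) :
    Matrix (Fin E) (Fin E) ℝ :=
  Matrix.diagonal r * Aᵀ * (A * Matrix.diagonal r * Aᵀ)⁻¹ * A

noncomputable def vMap {C E : ℕ} (A : Matrix (Fin C) (Fin E) ℝ) (r : Fin E → ℝ)
    (s : Fin E → ℝ) : Fin E → ℝ :=
  -(OmMat A r *ᵥ s)

noncomputable def iMap {C E : ℕ} (A : Matrix (Fin C) (Fin E) ℝ) (r : Fin E → ℝ)
    (s : Fin E → ℝ) : Fin E → ℝ :=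
  (Matrix.diagonal r)⁻¹ *ᵥ vMap A r s

/-!
Write `Ω = R G` with `G = Aᵀ (A R Aᵀ)⁻¹ A`, so that `i = -G s`. Moving `r_b` moves `R` in the
direction `E_bb` and `A R Aᵀ` in the direction `A E_bb Aᵀ`; by the product rule and
`d(M⁻¹) = -M⁻¹ dM M⁻¹`, `∂Ω/∂r_b = E_bb G - R G E_bb G = (I - Ω) E_bb G`. Applied to `-s` this
is `(I - Ω) E_bb i`, the `b`-th column of `(I - Ω) diag(i)`.
-/

theorem Matrix.linearIndependent_row_of_rank_eq_card {K m n : Type*} [Field K] [Fintype m]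
    [Fintype n] {M : Matrix m n K} (h : M.rank = Fintype.card m) :
    LinearIndependent K M.row := by
  rw [M.rank_eq_finrank_span_row] at h
  exact linearIndependent_iff_card_eq_finrank_span.mpr h.symm

theorem Matrix.posDef_mul_diagonal_mul_transpose {m n : Type*} [Fintype m] [Fintype n]
    [DecidableEq n] {A : Matrix m n ℝ} (hA : A.rank = Fintype.card m) {r : n → ℝ}
    (hr : ∀ e, 0 < r e) : (A * diagonal r * Aᵀ).PosDef := by
  simpa [conjTranspose_eq_transpose_of_trivial] using
    (PosDef.diagonal hr).mul_mul_conjTranspose_same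
      (vecMul_injective_iff.mpr (linearIndependent_row_of_rank_eq_card hA))

section MatrixCalculus

/- The statements use the product topology on matrices; inside the proofs any norm inducing it
will do, and the `L∞` operator norm makes square matrices a normed algebra, as
`hasFDerivAt_ringInverse` requires. -/
attribute [local instance] Matrix.linftyOpNormedAddCommGroup Matrix.linftyOpNormedSpace
  Matrix.linftyOpNormedRing Matrix.linftyOpNormedAlgebra

variable {l m n : Type*} [Fintype l] [Fintype m] [Fintype n] {t : ℝ}

theorem HasDerivAt.matrix_mul {X : ℝ → Matrix l m ℝ} {Y : ℝ → Matrix m n ℝ}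
    {X' : Matrix l m ℝ} {Y' : Matrix m n ℝ} (hX : HasDerivAt X X' t) (hY : HasDerivAt Y Y' t) :
    HasDerivAt (fun u => X u * Y u) (X' * Y t + X t * Y') t := by
  rw [add_comm]
  exact (mulLinearMap ℝ).toContinuousBilinearMap.hasDerivAt_of_bilinear (fun _ => hX) fun _ => hY

theorem HasDerivAt.const_matrix_mul (A : Matrix l m ℝ) {X : ℝ → Matrix m n ℝ}
    {X' : Matrix m n ℝ} (hX : HasDerivAt X X' t) : HasDerivAt (fun u => A * X u) (A * X') t :=
  (mulLeftLinearMap n ℝ A).toContinuousLinearMap.hasFDerivAt.comp_hasDerivAt t hX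

theorem HasDerivAt.matrix_mul_const {X : ℝ → Matrix l m ℝ} {X' : Matrix l m ℝ}
    (hX : HasDerivAt X X' t) (B : Matrix m n ℝ) : HasDerivAt (fun u => X u * B) (X' * B) t :=
  (mulRightLinearMap l ℝ B).toContinuousLinearMap.hasFDerivAt.comp_hasDerivAt t hX

theorem HasDerivAt.matrix_inv [DecidableEq n] {M : ℝ → Matrix n n ℝ} {M' : Matrix n n ℝ}
    (hM : HasDerivAt M M' t) (h : IsUnit (M t)) :
    HasDerivAt (fun u => (M u)⁻¹) (-((M t)⁻¹ * M' * (M t)⁻¹)) t := by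
  have hinv := hasFDerivAt_ringInverse (𝕜 := ℝ) h.unit
  rw [h.unit_spec] at hinv
  have hcomp := hinv.comp_hasDerivAt t hM
  simp only [Matrix.coe_units_inv, h.unit_spec] at hcomp
  rw [show (fun u => (M u)⁻¹) = Ring.inverse ∘ M from funext fun u => nonsing_inv_eq_ringInverse _]
  exact hcomp

theorem HasDerivAt.matrix_mulVec {X : ℝ → Matrix m n ℝ} {X' : Matrix m n ℝ}
    (hX : HasDerivAt X X' t) (v : n → ℝ) : HasDerivAt (fun u => X u *ᵥ v) (X' *ᵥ v) t :=
  hasDerivAt_pi.2 fun i => HasDerivAt.fun_sum fun j _ =>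
    ((entryLinearMap ℝ ℝ i j).toContinuousLinearMap.hasFDerivAt.comp_hasDerivAt t hX).mul_const (v j)

theorem hasDerivAt_diagonal_update [DecidableEq n] (r : n → ℝ) (b : n) :
    HasDerivAt (fun u => diagonal (Function.update r b u)) (single b b 1) t := by
  rw [← diagonal_single]
  exact (diagonalLinearMap n ℝ ℝ).toContinuousLinearMap.hasFDerivAt.comp_hasDerivAt t
    (hasDerivAt_update r b t)

end MatrixCalculus

section VoltageMap

variable {C E : ℕ} {A : Matrix (Fin C) (Fin E) ℝ} {r : Fin E → ℝ}

theorem omMat_eq_diagonal_mul (A : Matrix (Fin C) (Fin E) ℝ) (r : Fin E → ℝ) :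
    OmMat A r = diagonal r * (Aᵀ * (A * diagonal r * Aᵀ)⁻¹ * A) := by
  simp only [OmMat, Matrix.mul_assoc]

theorem iMap_eq_neg_mulVec (hr : ∀ e, r e ≠ 0) (s : Fin E → ℝ) :
    iMap A r s = -((Aᵀ * (A * diagonal r * Aᵀ)⁻¹ * A) *ᵥ s) := by
  have hR : IsUnit (diagonal r).det := by
    simpa [det_diagonal] using Finset.prod_ne_zero_iff.mpr fun e _ => hr e
  rw [iMap, vMap, omMat_eq_diagonal_mul, mulVec_neg, mulVec_mulVec, ← Matrix.mul_assoc,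
    nonsing_inv_mul _ hR, Matrix.one_mul]

theorem hasDerivAt_omMat_update (hA : A.rank = C) (hr : ∀ e, 0 < r e) (b : Fin E) :
    HasDerivAt (fun u => OmMat A (Function.update r b u))
      ((1 - OmMat A r) * single b b 1 * (Aᵀ * (A * diagonal r * Aᵀ)⁻¹ * A)) (r b) := by
  have hR := hasDerivAt_diagonal_update (t := r b) r b
  have hM := (hR.const_matrix_mul A).matrix_mul_const Aᵀ
  have hunit : IsUnit (A * diagonal (Function.update r b (r b)) * Aᵀ) := by
    simpa using (posDef_mul_diagonal_mul_transpose (by simpa using hA) hr).isUnit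
  have hP := ((hR.matrix_mul_const Aᵀ).matrix_mul (hM.matrix_inv hunit)).matrix_mul_const A
  rw [Function.update_eq_self] at hP
  convert hP using 1
  · rfl
  · simp only [OmMat, Matrix.add_mul, Matrix.mul_neg, Matrix.neg_mul, Matrix.one_mul,
      Matrix.mul_assoc, sub_eq_add_neg]

theorem hasDerivAt_vMap_update (hA : A.rank = C) (hr : ∀ e, 0 < r e) (b : Fin E)
    (s : Fin E → ℝ) :
    HasDerivAt (fun u => vMap A (Function.update r b u) s)
      (((1 - OmMat A r) * diagonal (iMap A r s)).col b) (r b) := by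
  have hcol : ((1 - OmMat A r) * diagonal (iMap A r s)).col b =
      -(((1 - OmMat A r) * single b b 1 * (Aᵀ * (A * diagonal r * Aᵀ)⁻¹ * A)) *ᵥ s) := by
    ext a
    rw [iMap_eq_neg_mulVec fun e => (hr e).ne']
    simp only [← mulVec_mulVec, col_apply, mul_diagonal, Matrix.sub_apply, Pi.neg_apply, mul_neg,
      single_mulVec_eq, one_mul, mulVec_smul, mulVec_single, MulOpposite.op_one, one_smul,
      Pi.smul_apply, smul_eq_mul, neg_inj]
    ring
  rw [hcol]
  exact ((hasDerivAt_omMat_update hA hr b).matrix_mulVec s).neg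

end VoltageMap

theorem jacobian_of_voltage_map
    (C E : ℕ) (A : Matrix (Fin C) (Fin E) ℝ) (r : Fin E → ℝ) (s : Fin E → ℝ)
    (hA : A.rank = C) (hr : ∀ e, 0 < r e) :
    ∀ a b : Fin E,
      HasDerivAt (fun t : ℝ => vMap A (Function.update r b t) s a)
        (((1 - OmMat A r) * Matrix.diagonal (iMap A r s)) a b) (r b) :=
  fun a b => hasDerivAt_pi.1 (hasDerivAt_vMap_update hA hr b s) a
end
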